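/- Let z₁,…,z_K be distinct complex numbers and ρ₁,…,ρ_K nonzero complex coefficients, and let τ̃_r = Σ_{k=1}^K ρ_k z_k^r. Then z₁,…,z_K (and subsequently ρ₁,…,ρ_K) are uniquely determined by the 2K values τ̃_0, τ̃_1, …, τ̃_{2K−1}: if another set of distinct nodes w₁,…,w_K with nonzero weights σ_k satisfies Σ_k σ_k w_k^r = τ̃_r for r = 0,…,2K−1, then {(w_k, σ_k)} = {(z_k, ρ_k)} as multisets. -/
import Mathlib


open Finset

open Polynomial in
lemma prony_key (n : ℕ) (S : Finset ℂ) (c : ℂ → ℂ) (hcard : S.card ≤ n)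
    (hsum : ∀ r < n, ∑ x ∈ S, c x * x ^ r = 0) : ∀ x ∈ S, c x = 0 := by
  intro x₀ hx₀
  set Q : Polynomial ℂ := ∏ y ∈ S.erase x₀, (X - C y) with hQ
  have hdeg : Q.natDegree < n := by
    have h1 : Q.natDegree = (S.erase x₀).card := by
      rw [hQ, natDegree_prod]
      · simp
      · intro y _; exact X_sub_C_ne_zero y
    rw [h1]
    calc (S.erase x₀).card < S.card := Finset.card_erase_lt_of_mem hx₀
    _ ≤ n := hcard
  have heval : ∑ x ∈ S, c x * Q.eval x = 0 := by
    have he : ∀ x : ℂ, Q.eval x = ∑ r ∈ Finset.range n, Q.coeff r * x ^ r :=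
      fun x => eval_eq_sum_range' hdeg x
    calc ∑ x ∈ S, c x * Q.eval x
        = ∑ x ∈ S, ∑ r ∈ Finset.range n, Q.coeff r * (c x * x ^ r) := by
          refine Finset.sum_congr rfl fun x _ => ?_
          rw [he x, Finset.mul_sum]
          exact Finset.sum_congr rfl fun r _ => by ring
      _ = ∑ r ∈ Finset.range n, Q.coeff r * ∑ x ∈ S, c x * x ^ r := by
          rw [Finset.sum_comm]
          exact Finset.sum_congr rfl fun r _ => by rw [Finset.mul_sum]
      _ = 0 := by
          refine Finset.sum_eq_zero fun r hr => ?_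
          rw [hsum r (Finset.mem_range.mp hr), mul_zero]
  have hzero : ∀ y ∈ S.erase x₀, c y * Q.eval y = 0 := by
    intro y hy
    have : Q.eval y = 0 := by
      rw [hQ, eval_prod]
      exact Finset.prod_eq_zero hy (by simp)
    rw [this, mul_zero]
  have hrest : c x₀ * Q.eval x₀ = 0 := by
    have h2 := Finset.sum_erase_add S (fun x => c x * Q.eval x) hx₀
    rw [Finset.sum_eq_zero hzero, zero_add, heval] at h2
    simpa using h2
  have hQx₀ : Q.eval x₀ ≠ 0 := by
    rw [hQ, eval_prod]
    refine Finset.prod_ne_zero_iff.mpr fun y hy => ?_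
    simp only [eval_sub, eval_X, eval_C, sub_ne_zero]
    exact fun h => (Finset.ne_of_mem_erase hy) h.symm
  exact (mul_eq_zero.mp hrest).resolve_right hQx₀

/-- Uniqueness of the Prony parameterization: a linear combination of `K` distinct
exponentials with nonzero amplitudes is determined by its first `2K` power sums. -/
theorem stmt3
    (K : ℕ)
    (z : Fin K → ℂ) (hz : Function.Injective z)
    (ρ : Fin K → ℂ) (hρ : ∀ k, ρ k ≠ 0)
    (w : Fin K → ℂ) (hw : Function.Injective w)
    (σ : Fin K → ℂ) (hσ : ∀ k, σ k ≠ 0)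
    (hmatch : ∀ r < 2 * K, ∑ k, σ k * w k ^ r = ∑ k, ρ k * z k ^ r) :
    Multiset.map (fun k => (w k, σ k)) Finset.univ.val
      = Multiset.map (fun k => (z k, ρ k)) Finset.univ.val := by
  classical
  set S : Finset ℂ := Finset.image z Finset.univ ∪ Finset.image w Finset.univ with hS
  have hzS : ∀ k, z k ∈ S := fun k => Finset.mem_union_left _ (Finset.mem_image_of_mem z (Finset.mem_univ k))
  have hwS : ∀ k, w k ∈ S := fun k => Finset.mem_union_right _ (Finset.mem_image_of_mem w (Finset.mem_univ k))
  set Fz : ℂ → ℂ := fun x => ∑ k ∈ Finset.univ.filter (fun k => z k = x), ρ k with hFz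
  set Fw : ℂ → ℂ := fun x => ∑ k ∈ Finset.univ.filter (fun k => w k = x), σ k with hFw
  have hfib : ∀ (f : Fin K → ℂ) (g : Fin K → ℂ) (hgS : ∀ k, g k ∈ S) (r : ℕ),
      ∑ x ∈ S, (∑ k ∈ Finset.univ.filter (fun k => g k = x), f k) * x ^ r
        = ∑ k, f k * g k ^ r := by
    intro f g hgS r
    rw [← Finset.sum_fiberwise_of_maps_to (g := g) (fun k _ => hgS k)
      (f := fun k => f k * g k ^ r)]
    refine Finset.sum_congr rfl fun x _ => ?_
    rw [Finset.sum_mul]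
    refine Finset.sum_congr rfl fun k hk => ?_
    rw [(Finset.mem_filter.mp hk).2]
  have hcard : S.card ≤ 2 * K := by
    calc S.card ≤ (Finset.image z Finset.univ).card + (Finset.image w Finset.univ).card :=
          Finset.card_union_le _ _
      _ ≤ K + K := by
          have h1 : (Finset.image z Finset.univ).card ≤ K := by
            simpa using Finset.card_image_le (s := (Finset.univ : Finset (Fin K))) (f := z)
          have h2 : (Finset.image w Finset.univ).card ≤ K := by
            simpa using Finset.card_image_le (s := (Finset.univ : Finset (Fin K))) (f := w)
          omega
      _ = 2 * K := by ring
  have hzero : ∀ x ∈ S, Fz x - Fw x = 0 := by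
    refine prony_key (2 * K) S (fun x => Fz x - Fw x) hcard fun r hr => ?_
    have h1 := hfib ρ z hzS r
    have h2 := hfib σ w hwS r
    calc ∑ x ∈ S, (Fz x - Fw x) * x ^ r
        = (∑ x ∈ S, Fz x * x ^ r) - ∑ x ∈ S, Fw x * x ^ r := by
          rw [← Finset.sum_sub_distrib]
          exact Finset.sum_congr rfl fun x _ => by ring
      _ = 0 := by rw [hFz, hFw] at *; rw [h1, h2, hmatch r hr, sub_self]
  have hmain : ∀ k, ∃ j, z j = w k ∧ ρ j = σ k := by
    intro k
    have hk : Fz (w k) = Fw (w k) := sub_eq_zero.mp (hzero (w k) (hwS k))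
    have hFwk : Fw (w k) = σ k := by
      rw [hFw]
      have : Finset.univ.filter (fun j => w j = w k) = {k} := by
        ext j; simp [hw.eq_iff]
      simp [this]
    have hne : (Finset.univ.filter (fun j => z j = w k)).Nonempty := by
      by_contra hemp
      rw [Finset.not_nonempty_iff_eq_empty] at hemp
      rw [hFz] at hk
      simp only [hemp, Finset.sum_empty] at hk
      exact hσ k (by rw [← hFwk, ← hk])
    obtain ⟨j, hj⟩ := hne
    have hjz : z j = w k := (Finset.mem_filter.mp hj).2
    refine ⟨j, hjz, ?_⟩
    have : Finset.univ.filter (fun i => z i = w k) = {j} := by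
      ext i
      simp only [Finset.mem_filter, Finset.mem_univ, true_and, Finset.mem_singleton]
      constructor
      · intro hi; exact hz (hi.trans hjz.symm)
      · intro hi; rw [hi, hjz]
    rw [← hFwk, ← hk, hFz]
    simp [this]
  choose φ hφ1 hφ2 using hmain
  have hinj : Function.Injective φ := fun a b hab => hw (by rw [← hφ1, ← hφ1, hab])
  have hbij : Function.Bijective φ := Finite.injective_iff_bijective.mp hinj
  have hcomp : (fun k => (w k, σ k)) = (fun j => (z j, ρ j)) ∘ φ :=
    funext fun k => by simp [Function.comp, hφ1, hφ2]
  rw [hcomp, ← Multiset.map_map]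
  congr 1
  have := Finset.map_univ_equiv (Equiv.ofBijective φ hbij).symm.symm
  calc Multiset.map φ Finset.univ.val
      = (Finset.map (Equiv.ofBijective φ hbij).toEmbedding Finset.univ).val := rfl
    _ = Finset.univ.val := by rw [Finset.map_univ_equiv]
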